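/- arXiv:1801.09480 — 9 statements merged into one kernel-verified Lean document; each statement's English description precedes it below -/
import Mathlib

section
/- Let G be a finite abelian (additive) group, let A ⊆ G be a symmetric subset (A = -A) with 0 ∈ A, and let B ⊆ G be a subset such that b - b' ∉ A for all distinct b, b' ∈ B. Suppose f : G → ℝ satisfies: f(x) ≤ 0 for every x ∉ A; for every additive character γ : G → ℂ the sum Σ_{x ∈ G} γ(x)·f(x) is a nonnegative real number; and Σ_{x ∈ G} f(x) > 0. Then |B| · (Σ_{x ∈ G} f(x)) ≤ f(0) · |G|. -/
/-!
Write `S γ = ∑ b ∈ B, γ b`. Orthogonality of characters gives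
`∑ γ, f̂ γ * |S γ|² = |G| * ∑ b ∈ B, ∑ b' ∈ B, f (b' - b)`.
Every term on the left is nonnegative, so the left side is at least the term of the trivial
character, `f̂ 1 * |B|²`; on the right, the off-diagonal differences lie outside `A`, so the
double sum is at most `|B| * f 0`. For empty `B` the claim is `0 ≤ f 0`, which follows from
Fourier inversion at the origin, `|G| * f 0 = ∑ γ, f̂ γ`.
-/

open Finset ComplexOrder

namespace AddChar

variable {G : Type*} [AddCommGroup G] [Fintype G]

lemma sum_sum_apply_mul (g : G → ℂ) :
    ∑ γ : AddChar G ℂ, ∑ x, γ x * g x = Fintype.card G * g 0 := by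
  classical
  rw [sum_comm]
  simp_rw [← sum_mul, sum_apply_eq_ite, ite_mul, zero_mul, sum_ite_eq', mem_univ, if_true]

lemma sum_apply_mul_mul_apply (γ : AddChar G ℂ) (f : G → ℂ) (a : G) :
    (∑ x, γ x * f x) * γ a = ∑ x, γ x * f (x - a) := by
  rw [sum_mul, ← Equiv.sum_comp (Equiv.addRight a) (fun x => γ x * f (x - a))]
  simp only [Equiv.coe_addRight, add_sub_cancel_right, map_add_eq_mul, mul_right_comm]

lemma normSq_sum_apply (γ : AddChar G ℂ) (B : Finset G) :
    (Complex.normSq (∑ b ∈ B, γ b) : ℂ) = ∑ b ∈ B, ∑ b' ∈ B, γ (b - b') := by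
  rw [← Complex.mul_conj, map_sum, sum_mul_sum]
  simp_rw [sub_eq_add_neg, map_add_eq_mul, map_neg_eq_conj]

lemma sum_apply_mul_mul_normSq (f : G → ℂ) (B : Finset G) :
    ∑ γ : AddChar G ℂ, (∑ x, γ x * f x) * Complex.normSq (∑ b ∈ B, γ b) =
      Fintype.card G * ∑ b ∈ B, ∑ b' ∈ B, f (b' - b) := by
  simp_rw [normSq_sum_apply, mul_sum, sum_apply_mul_mul_apply]
  rw [sum_comm]
  refine sum_congr rfl fun b _ => ?_
  rw [sum_comm]
  refine sum_congr rfl fun b' _ => ?_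
  rw [sum_sum_apply_mul, zero_sub, neg_sub]

lemma apply_zero_nonneg_of_forall_sum_nonneg {f : G → ℝ}
    (hf : ∀ γ : AddChar G ℂ, 0 ≤ ∑ x, γ x * (f x : ℂ)) : 0 ≤ f 0 := by
  have h := sum_sum_apply_mul fun x => (f x : ℂ)
  have : (0 : ℂ) ≤ Fintype.card G * f 0 := h ▸ sum_nonneg fun γ _ => hf γ
  exact nonneg_of_mul_nonneg_right (by exact_mod_cast this) (by simp [Fintype.card_pos])

lemma card_sq_mul_sum_le_of_forall_sum_nonneg {f : G → ℝ}
    (hf : ∀ γ : AddChar G ℂ, 0 ≤ ∑ x, γ x * (f x : ℂ)) (B : Finset G) :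
    (#B : ℝ) ^ 2 * ∑ x, f x ≤ Fintype.card G * ∑ b ∈ B, ∑ b' ∈ B, f (b' - b) := by
  have weight_nonneg (γ : AddChar G ℂ) :
      0 ≤ (∑ x, γ x * (f x : ℂ)) * Complex.normSq (∑ b ∈ B, γ b) :=
    mul_nonneg (hf γ) (by exact_mod_cast Complex.normSq_nonneg _)
  have h := single_le_sum (fun γ _ => weight_nonneg γ) (mem_univ (0 : AddChar G ℂ))
  rw [sum_apply_mul_mul_normSq] at h
  simp only [zero_apply, one_mul, sum_const, nsmul_eq_mul, mul_one, Complex.normSq_natCast] at h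
  rw [sq, mul_comm]
  exact_mod_cast h

end AddChar

lemma sum_sum_apply_sub_le {G : Type*} [AddGroup G] (A : Set G) (B : Finset G)
    (hB : ∀ b ∈ B, ∀ b' ∈ B, b ≠ b' → b - b' ∉ A) (f : G → ℝ) (hf : ∀ x ∉ A, f x ≤ 0) :
    ∑ b ∈ B, ∑ b' ∈ B, f (b' - b) ≤ #B * f 0 := by
  classical
  rw [← nsmul_eq_mul, ← sum_const]
  refine sum_le_sum fun b hb => ?_
  rw [← add_sum_erase _ _ hb, sub_self, add_le_iff_nonpos_right]
  exact sum_nonpos fun b' hb' =>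
    hf _ (hB b' (mem_of_mem_erase hb') b hb (ne_of_mem_erase hb'))

open ComplexOrder in
theorem delsarte_lp_bound_general {G : Type*} [AddCommGroup G] [Fintype G]
    (A : Set G)
    (B : Finset G) (hB : ∀ b ∈ B, ∀ b' ∈ B, b ≠ b' → b - b' ∉ A)
    (f : G → ℝ)
    (hf_nonpos : ∀ x ∉ A, f x ≤ 0)
    (hf_hat : ∀ γ : AddChar G ℂ, 0 ≤ ∑ x : G, γ x * (f x : ℂ)) :
    (B.card : ℝ) * (∑ x : G, f x) ≤ f 0 * (Fintype.card G : ℝ) := by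
  rcases B.eq_empty_or_nonempty with rfl | hB_ne
  · simpa using mul_nonneg (AddChar.apply_zero_nonneg_of_forall_sum_nonneg hf_hat)
      (Fintype.card G).cast_nonneg
  have hB_pos : (0 : ℝ) < #B := by exact_mod_cast hB_ne.card_pos
  refine le_of_mul_le_mul_left ?_ hB_pos
  calc (#B : ℝ) * (#B * ∑ x, f x) = #B ^ 2 * ∑ x, f x := by ring
    _ ≤ Fintype.card G * ∑ b ∈ B, ∑ b' ∈ B, f (b' - b) :=
      AddChar.card_sq_mul_sum_le_of_forall_sum_nonneg hf_hat B
    _ ≤ Fintype.card G * (#B * f 0) := by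
      gcongr
      exact sum_sum_apply_sub_le A B hB f hf_nonpos
    _ = #B * (f 0 * Fintype.card G) := by ring

open ComplexOrder in
/-- The Delsarte LP bound over a finite abelian group. -/
theorem delsarte_lp_bound {G : Type*} [AddCommGroup G] [Fintype G]
    (A : Set G) (hA : ∀ x, -x ∈ A ↔ x ∈ A) (h0 : (0 : G) ∈ A)
    (B : Finset G) (hB : ∀ b ∈ B, ∀ b' ∈ B, b ≠ b' → b - b' ∉ A)
    (f : G → ℝ)
    (hf_nonpos : ∀ x ∉ A, f x ≤ 0)
    (hf_hat : ∀ γ : AddChar G ℂ, 0 ≤ ∑ x : G, γ x * (f x : ℂ))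
    (hf_sum : 0 < ∑ x : G, f x) :
    (B.card : ℝ) * (∑ x : G, f x) ≤ f 0 * (Fintype.card G : ℝ) :=
  delsarte_lp_bound_general A B hB f hf_nonpos hf_hat
end

section
/- Let n ≥ 1 and let B ⊆ (ZMod n)^n be a set of exactly n² vectors with the plane code property. Then B can be partitioned into n pairwise disjoint classes, each of size n, such that: whenever b, b' ∈ B are distinct elements of the same class, b - b' has no coordinate equal to 0; and whenever b, b' belong to different classes, b - b' has exactly one coordinate equal to 0. -/
/-!
Two coordinates determine a vector of a plane code, so for `i ≠ j` the map `x ↦ (x i, x j)` is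
injective on `B`, hence (as `#B = n²`) a bijection onto `(ZMod n)²`; in particular every fibre
`{x ∈ B | x i = v}` has `n` elements. Call `x` parallel to `b` if `x = b` or `x` agrees with `b`
nowhere. For `v ≠ b i`, the fibre `{x | x i = v}` contains exactly one vector agreeing with `b`
in coordinate `j` for each `j ≠ i`, and no vector agrees with `b` twice, so exactly
`n - (n - 1) = 1` vector of the fibre is parallel to `b`. Thus the parallel class of `b` meets
every coordinate fibre exactly once: its members pairwise agree nowhere, parallelism is an
equivalence relation, and its classes, one through each vector of `{x | x 0 = 0}`, are the `n`
blocks of the partition. Vectors in different classes agree somewhere, hence exactly once.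
-/

/-- The number of coordinates where two vectors in `(ZMod n)^n` agree,
i.e. the number of coordinates of `b - b'` equal to `0`. -/
def agreeCount {n : ℕ} (b b' : Fin n → ZMod n) : ℕ :=
  (Finset.univ.filter fun i => b i - b' i = 0).card

/-- `B` has the plane code property: any two distinct elements of `B`
agree in at most one coordinate. -/
def PlaneCode {n : ℕ} (B : Finset (Fin n → ZMod n)) : Prop :=
  ∀ b ∈ B, ∀ b' ∈ B, b ≠ b' → agreeCount b b' ≤ 1

open Finset

theorem agreeCount_eq_zero_iff {n : ℕ} {b b' : Fin n → ZMod n} :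
    agreeCount b b' = 0 ↔ ∀ i, b i ≠ b' i := by
  simp [agreeCount, filter_eq_empty_iff, sub_eq_zero]

theorem two_le_agreeCount {n : ℕ} {b b' : Fin n → ZMod n} {i j : Fin n} (hij : i ≠ j)
    (hi : b i = b' i) (hj : b j = b' j) : 2 ≤ agreeCount b b' := by
  rw [agreeCount, ← card_pair hij]
  exact card_le_card (by simp [insert_subset_iff, hi, hj])

def parallelClass {n : ℕ} (B : Finset (Fin n → ZMod n)) (b : Fin n → ZMod n) :
    Finset (Fin n → ZMod n) :=
  B.filter fun x => x = b ∨ ∀ i, x i ≠ b i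

theorem self_mem_parallelClass {n : ℕ} {B : Finset (Fin n → ZMod n)} {b : Fin n → ZMod n}
    (hb : b ∈ B) : b ∈ parallelClass B b :=
  mem_filter.mpr ⟨hb, Or.inl rfl⟩

namespace PlaneCode

variable {n : ℕ} {B : Finset (Fin n → ZMod n)} {b x y : Fin n → ZMod n}

theorem eq_of_apply_eq_of_apply_eq (hB : PlaneCode B) (hx : x ∈ B) (hy : y ∈ B) {i j : Fin n}
    (hij : i ≠ j) (hi : x i = y i) (hj : x j = y j) : x = y := by
  by_contra hne
  have := hB x hx y hy hne
  have := two_le_agreeCount hij hi hj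
  omega

theorem card_filter_apply_eq_apply_eq (hB : PlaneCode B) (hcard : #B = n ^ 2) {i j : Fin n}
    (hij : i ≠ j) (u v : ZMod n) : #{x ∈ B | x i = u ∧ x j = v} = 1 := by
  have : NeZero n := ⟨i.pos.ne'⟩
  have hinj : Set.InjOn (fun x : Fin n → ZMod n => (x i, x j)) B := fun x hx y hy hxy =>
    hB.eq_of_apply_eq_of_apply_eq hx hy hij (congrArg Prod.fst hxy) (congrArg Prod.snd hxy)
  have himage : B.image (fun x => (x i, x j)) = univ :=
    eq_univ_of_card _ (by rw [card_image_of_injOn hinj, hcard, Fintype.card_prod, ZMod.card, sq])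
  obtain ⟨x, hx, hxuv⟩ := mem_image.mp (himage ▸ mem_univ (u, v))
  refine card_eq_one.mpr ⟨x, eq_singleton_iff_unique_mem.mpr ⟨?_, fun y hy => ?_⟩⟩
  · simpa [Prod.ext_iff] using And.intro hx hxuv
  · rw [mem_filter] at hy
    exact hinj hy.1 hx (by simp [hy.2, hxuv])

theorem card_filter_apply_eq (hB : PlaneCode B) (hcard : #B = n ^ 2) (hn : 2 ≤ n)
    (i : Fin n) (u : ZMod n) : #{x ∈ B | x i = u} = n := by
  have : NeZero n := ⟨by omega⟩
  have : Nontrivial (Fin n) := Fin.nontrivial_iff_two_le.mpr hn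
  obtain ⟨j, hji⟩ := exists_ne i
  rw [card_eq_sum_card_fiberwise (f := (· j)) (t := univ) (fun _ _ => mem_univ _)]
  simp only [filter_filter, hB.card_filter_apply_eq_apply_eq hcard hji.symm, sum_const,
    card_univ, ZMod.card, smul_eq_mul, mul_one]

theorem card_filter_parallelClass_apply_eq (hB : PlaneCode B) (hcard : #B = n ^ 2) (hn : 2 ≤ n)
    (hb : b ∈ B) (i : Fin n) (v : ZMod n) : #{x ∈ parallelClass B b | x i = v} = 1 := by
  rcases eq_or_ne v (b i) with rfl | hv
  · refine card_eq_one.mpr ⟨b, eq_singleton_iff_unique_mem.mpr ⟨?_, fun x hx => ?_⟩⟩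
    · exact mem_filter.mpr ⟨self_mem_parallelClass hb, rfl⟩
    · simp only [parallelClass, mem_filter] at hx
      exact hx.1.2.resolve_right fun h => h i hx.2
  set F := {x ∈ B | x i = v}
  set A := (univ.erase i).biUnion fun j => {x ∈ F | x j = b j}
  have hA : #A = n - 1 := by
    rw [card_biUnion]
    · rw [sum_congr rfl fun j hj => ?_, sum_const, card_erase_of_mem (mem_univ i), card_univ,
        Fintype.card_fin, smul_eq_mul, mul_one]
      rw [filter_filter]
      exact hB.card_filter_apply_eq_apply_eq hcard (ne_of_mem_erase hj).symm v (b j)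
    · intro j _ k _ hjk
      refine disjoint_left.mpr fun x hxj hxk => ?_
      simp only [F, mem_filter] at hxj hxk
      exact hv (hxj.1.2 ▸ congrFun (hB.eq_of_apply_eq_of_apply_eq hxj.1.1 hb hjk hxj.2 hxk.2) i)
  have hclass : {x ∈ parallelClass B b | x i = v} = F \ A := by
    ext x
    simp only [parallelClass, F, A, mem_filter, mem_sdiff, mem_biUnion, mem_erase]
    constructor
    · rintro ⟨⟨hxB, hx⟩, hxi⟩
      have hxb : ∀ k, x k ≠ b k := hx.resolve_left fun h => hv (hxi ▸ congrFun h i)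
      exact ⟨⟨hxB, hxi⟩, fun ⟨k, _, _, hk⟩ => hxb k hk⟩
    · rintro ⟨⟨hxB, hxi⟩, hxA⟩
      refine ⟨⟨hxB, Or.inr fun k hk => ?_⟩, hxi⟩
      by_cases hki : k = i
      · exact hv (hxi ▸ hki ▸ hk)
      · exact hxA ⟨k, ⟨hki, mem_univ k⟩, ⟨hxB, hxi⟩, hk⟩
  rw [hclass, card_sdiff_of_subset (biUnion_subset.mpr fun _ _ => filter_subset _ _), hA,
    hB.card_filter_apply_eq hcard hn]
  omega

theorem card_parallelClass (hB : PlaneCode B) (hcard : #B = n ^ 2) (hn : 2 ≤ n) (hb : b ∈ B) :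
    #(parallelClass B b) = n := by
  have : NeZero n := ⟨by omega⟩
  rw [card_eq_sum_card_fiberwise (f := (· 0)) (t := univ) (fun _ _ => mem_univ _)]
  simp only [hB.card_filter_parallelClass_apply_eq hcard hn hb, sum_const, card_univ, ZMod.card,
    smul_eq_mul, mul_one]

theorem exists_mem_parallelClass_apply_eq (hB : PlaneCode B) (hcard : #B = n ^ 2) (hn : 2 ≤ n)
    (hb : b ∈ B) (i : Fin n) (v : ZMod n) : ∃ x ∈ parallelClass B b, x i = v := by
  obtain ⟨x, hx⟩ := card_pos.mp (hB.card_filter_parallelClass_apply_eq hcard hn hb i v).ge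
  exact ⟨x, (mem_filter.mp hx).1, (mem_filter.mp hx).2⟩

theorem apply_ne_of_mem_parallelClass (hB : PlaneCode B) (hcard : #B = n ^ 2) (hn : 2 ≤ n)
    (hb : b ∈ B) (hx : x ∈ parallelClass B b) (hy : y ∈ parallelClass B b) (hxy : x ≠ y)
    (i : Fin n) : x i ≠ y i := fun h =>
  hxy <| card_le_one.mp (hB.card_filter_parallelClass_apply_eq hcard hn hb i (y i)).le x
    (mem_filter.mpr ⟨hx, h⟩) y (mem_filter.mpr ⟨hy, rfl⟩)

theorem mem_parallelClass_of_mem (hB : PlaneCode B) (hcard : #B = n ^ 2) (hn : 2 ≤ n)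
    (hb : b ∈ B) (hx : x ∈ parallelClass B b) (hy : y ∈ parallelClass B b) :
    y ∈ parallelClass B x :=
  mem_filter.mpr ⟨(mem_filter.mp hy).1, or_iff_not_imp_left.mpr
    (hB.apply_ne_of_mem_parallelClass hcard hn hb hy hx)⟩

theorem parallelClass_eq_of_mem (hB : PlaneCode B) (hcard : #B = n ^ 2) (hn : 2 ≤ n)
    (hb : b ∈ B) (hx : x ∈ parallelClass B b) : parallelClass B x = parallelClass B b := by
  have hbx : b ∈ parallelClass B x :=
    hB.mem_parallelClass_of_mem hcard hn hb hx (self_mem_parallelClass hb)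
  ext y
  exact ⟨hB.mem_parallelClass_of_mem hcard hn (mem_filter.mp hx).1 hbx,
    hB.mem_parallelClass_of_mem hcard hn hb hx⟩

theorem agreeCount_eq_one_of_parallelClass_ne (hB : PlaneCode B) (hcard : #B = n ^ 2)
    (hn : 2 ≤ n) (hx : x ∈ B) (hy : y ∈ B) (hxy : parallelClass B x ≠ parallelClass B y) :
    agreeCount x y = 1 := by
  have hne : x ≠ y := by rintro rfl; exact hxy rfl
  have h0 : agreeCount x y ≠ 0 := fun h0 => hxy <| Eq.symm <|
    hB.parallelClass_eq_of_mem hcard hn hx <|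
      mem_filter.mpr ⟨hy, Or.inr fun i => (agreeCount_eq_zero_iff.mp h0 i).symm⟩
  have := hB x hx y hy hne
  omega

theorem exists_parallelClass_enumeration (hB : PlaneCode B) (hcard : #B = n ^ 2) (hn : 2 ≤ n) :
    ∃ c : Fin n → Fin n → ZMod n, (∀ k, c k ∈ B) ∧
      Function.Injective (parallelClass B ∘ c) ∧
      ∀ x ∈ B, ∃ k, parallelClass B x = parallelClass B (c k) := by
  have : NeZero n := ⟨by omega⟩
  set F := {x ∈ B | x 0 = 0}
  let e : Fin n ≃ F := (F.equivFin.trans (finCongr (hB.card_filter_apply_eq hcard hn 0 0))).symm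
  have heB (k : Fin n) : (e k : Fin n → ZMod n) ∈ B := (mem_filter.mp (e k).2).1
  have he0 (k : Fin n) : (e k : Fin n → ZMod n) 0 = 0 := (mem_filter.mp (e k).2).2
  refine ⟨fun k => e k, heB, fun k l hkl => ?_, fun x hx => ?_⟩
  · have hl : (e l : Fin n → ZMod n) ∈ parallelClass B (e k) := by
      rw [show parallelClass B (e k) = parallelClass B (e l) from hkl]
      exact self_mem_parallelClass (heB l)
    by_contra hne
    exact hB.apply_ne_of_mem_parallelClass hcard hn (heB k) (self_mem_parallelClass (heB k)) hl
      (fun h => hne (e.injective (Subtype.ext h))) 0 ((he0 k).trans (he0 l).symm)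
  · obtain ⟨y, hy, hy0⟩ := hB.exists_mem_parallelClass_apply_eq hcard hn hx 0 0
    have hyF : y ∈ F := mem_filter.mpr ⟨(mem_filter.mp hy).1, hy0⟩
    refine ⟨e.symm ⟨y, hyF⟩, ?_⟩
    simp only [e.apply_symm_apply]
    exact (hB.parallelClass_eq_of_mem hcard hn hx hy).symm

end PlaneCode

theorem plane_code_partition_general (n : ℕ)
    (B : Finset (Fin n → ZMod n)) (hcard : B.card = n ^ 2) (hB : PlaneCode B) :
    ∃ C : Fin n → Finset (Fin n → ZMod n),
      (∀ k, (C k).card = n) ∧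
      (∀ k l, k ≠ l → Disjoint (C k) (C l)) ∧
      (Finset.univ.biUnion C = B) ∧
      (∀ k, ∀ b ∈ C k, ∀ b' ∈ C k, b ≠ b' → agreeCount b b' = 0) ∧
      (∀ k l, k ≠ l → ∀ b ∈ C k, ∀ b' ∈ C l, agreeCount b b' = 1) := by
  rcases lt_or_ge n 2 with hn | hn
  · obtain rfl | rfl : n = 0 ∨ n = 1 := by omega
    · exact ⟨fun _ => ∅, (·.elim0), (·.elim0), by simp_all, (·.elim0), (·.elim0)⟩
    · exact ⟨fun _ => B, fun _ => by simpa using hcard,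
        fun k l h => absurd (Subsingleton.elim k l) h, by simp,
        fun _ b hb b' hb' h => absurd (card_le_one.mp (by simp [hcard]) b hb b' hb') h,
        fun k l h => absurd (Subsingleton.elim k l) h⟩
  obtain ⟨c, hcB, hinj, hcover⟩ := hB.exists_parallelClass_enumeration hcard hn
  have hclass {k : Fin n} {x : Fin n → ZMod n} (hx : x ∈ parallelClass B (c k)) :
      parallelClass B x = parallelClass B (c k) :=
    hB.parallelClass_eq_of_mem hcard hn (hcB k) hx
  refine ⟨fun k => parallelClass B (c k), fun k => hB.card_parallelClass hcard hn (hcB k),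
    fun k l hkl => disjoint_left.mpr fun x hxk hxl => hkl (hinj ?_), ?_, ?_, ?_⟩
  · exact (hclass hxk).symm.trans (hclass hxl)
  · ext x
    simp only [mem_biUnion, mem_univ, true_and]
    refine ⟨fun ⟨k, hk⟩ => (mem_filter.mp hk).1, fun hx => ?_⟩
    obtain ⟨k, hk⟩ := hcover x hx
    exact ⟨k, hk ▸ self_mem_parallelClass hx⟩
  · exact fun k b hb b' hb' hne => agreeCount_eq_zero_iff.mpr
      (hB.apply_ne_of_mem_parallelClass hcard hn (hcB k) hb hb' hne)
  · intro k l hkl b hb b' hb'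
    refine hB.agreeCount_eq_one_of_parallelClass_ne hcard hn (mem_filter.mp hb).1
      (mem_filter.mp hb').1 ?_
    rw [hclass hb, hclass hb']
    exact fun h => hkl (hinj h)

theorem plane_code_partition (n : ℕ) (hn : 1 ≤ n)
    (B : Finset (Fin n → ZMod n)) (hcard : B.card = n ^ 2) (hB : PlaneCode B) :
    ∃ C : Fin n → Finset (Fin n → ZMod n),
      (∀ k, (C k).card = n) ∧
      (∀ k l, k ≠ l → Disjoint (C k) (C l)) ∧
      (Finset.univ.biUnion C = B) ∧
      (∀ k, ∀ b ∈ C k, ∀ b' ∈ C k, b ≠ b' → agreeCount b b' = 0) ∧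
      (∀ k l, k ≠ l → ∀ b ∈ C k, ∀ b' ∈ C l, agreeCount b b' = 1) :=
  plane_code_partition_general n B hcard hB
end

section
/- Let n ≥ 1 and let B ⊆ (ZMod n)^n be a set of exactly n² vectors with the plane code property. Let ζ = exp(2πi/n) ∈ ℂ. Then for every pair of distinct indices i, j ∈ Fin n and all exponents k, m ∈ ZMod n with (k, m) ≠ (0, 0), we have Σ_{b ∈ B} ζ^{k·b_i + m·b_j} = 0 (where the exponent k·b_i + m·b_j ∈ ZMod n determines a well-defined power of the n-th root of unity ζ). -/
/-!
Two distinct codewords with the same coordinates at `i` and `j` would agree in two coordinates,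
so `b ↦ (b i, b j)` is injective on `B` and, as `|B| = n²`, a bijection onto `(ZMod n)²`.
Writing `ζ ^ a.val` as the standard additive character `ψ a` of `ZMod n`, the sum becomes
`∑ x, ψ (k * x) * ∑ y, ψ (m * y)`, and one of the factors vanishes because `ψ` is primitive.
-/

open Finset Complex Real

theorem AddChar.IsPrimitive.sum_mul_add_mul_eq_zero {R R' : Type*} [CommRing R] [Fintype R]
    [CommRing R'] [IsDomain R'] {ψ : AddChar R R'} (hψ : ψ.IsPrimitive) {k m : R}
    (hkm : (k, m) ≠ (0, 0)) : ∑ p : R × R, ψ (k * p.1 + m * p.2) = 0 := by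
  classical
  simp_rw [Fintype.sum_prod_type, AddChar.map_add_eq_mul, ← mul_sum, ← sum_mul, mul_comm k,
    mul_comm m, AddChar.sum_mulShift _ hψ]
  split_ifs <;> simp_all

theorem ZMod.exp_two_pi_I_div_pow_val {n : ℕ} [NeZero n] (a : ZMod n) :
    exp (2 * π * I / n) ^ a.val = ZMod.stdAddChar a := by
  rw [← Complex.exp_nat_mul, ZMod.stdAddChar_apply, ZMod.toCircle_apply]
  ring_nf

namespace PlaneCode

variable {n : ℕ} {B : Finset (Fin n → ZMod n)} {i j : Fin n}

theorem injOn_pair (hB : PlaneCode B) (hij : i ≠ j) :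
    Set.InjOn (fun b : Fin n → ZMod n ↦ (b i, b j)) B := by
  intro b hb b' hb' hbb'
  simp only [Prod.mk.injEq] at hbb'
  by_contra hne
  have hsub : ({i, j} : Finset (Fin n)) ⊆ univ.filter fun l ↦ b l - b' l = 0 := by
    simp [insert_subset_iff, hbb'.1, hbb'.2]
  have := (card_le_card hsub).trans (hB b hb b' hb' hne)
  rw [card_pair hij] at this
  omega

theorem sum_pair_eq_sum [NeZero n] {M : Type*} [AddCommMonoid M] (hB : PlaneCode B)
    (hcard : B.card = n ^ 2) (hij : i ≠ j) (f : ZMod n × ZMod n → M) :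
    ∑ b ∈ B, f (b i, b j) = ∑ p, f p := by
  have himage : B.image (fun b ↦ (b i, b j)) = univ := by
    refine eq_univ_of_card _ ?_
    rw [card_image_of_injOn (hB.injOn_pair hij), hcard, Fintype.card_prod, ZMod.card, sq]
  rw [← himage, sum_image (hB.injOn_pair hij)]

end PlaneCode

theorem plane_code_character_sum_two_general (n : ℕ)
    (B : Finset (Fin n → ZMod n)) (hcard : B.card = n ^ 2) (hB : PlaneCode B)
    (ζ : ℂ) (hζ : ζ = Complex.exp (2 * Real.pi * Complex.I / n))
    (i j : Fin n) (hij : i ≠ j) (k m : ZMod n) (hkm : (k, m) ≠ (0, 0)) :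
    ∑ b ∈ B, ζ ^ (k * b i + m * b j).val = 0 := by
  have : NeZero n := ⟨i.pos.ne'⟩
  simp_rw [hζ, ZMod.exp_two_pi_I_div_pow_val]
  rw [hB.sum_pair_eq_sum hcard hij fun p ↦ ZMod.stdAddChar (k * p.1 + m * p.2)]
  exact (ZMod.isPrimitive_stdAddChar n).sum_mul_add_mul_eq_zero hkm

theorem plane_code_character_sum_two (n : ℕ) (hn : 1 ≤ n)
    (B : Finset (Fin n → ZMod n)) (hcard : B.card = n ^ 2) (hB : PlaneCode B)
    (ζ : ℂ) (hζ : ζ = Complex.exp (2 * Real.pi * Complex.I / n))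
    (i j : Fin n) (hij : i ≠ j) (k m : ZMod n) (hkm : (k, m) ≠ (0, 0)) :
    ∑ b ∈ B, ζ ^ (k * b i + m * b j).val = 0 :=
  plane_code_character_sum_two_general n B hcard hB ζ hζ i j hij k m hkm
end

section
/- Let n ≥ 1 and let B ⊆ (ZMod n)^n be a set of exactly n² vectors with the plane code property. Let ζ = exp(2πi/n) ∈ ℂ. Then for every index j ∈ Fin n and every exponent m ∈ ZMod n with m ≠ 0, we have Σ_{b ∈ B} ζ^{m·b_j} = 0 (where the exponent m·b_j ∈ ZMod n determines a well-defined power of the n-th root of unity ζ). -/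
open Finset

theorem IsPrimitiveRoot.sum_pow_val_mul_eq_zero {R : Type*} [CommRing R] [IsDomain R] {n : ℕ}
    [NeZero n] {ζ : R} (hζ : IsPrimitiveRoot ζ n) {m : ZMod n} (hm : m ≠ 0) :
    ∑ c : ZMod n, ζ ^ (m * c).val = 0 := by
  classical
  simpa [hm, mul_comm, AddChar.zmodChar_apply] using
    AddChar.sum_mulShift m (AddChar.zmodChar_primitive_of_primitive_root n hζ)

namespace PlaneCode

variable {n : ℕ} {B : Finset (Fin n → ZMod n)}

theorem injOn_apply_pair (hB : PlaneCode B) {i j : Fin n} (hij : i ≠ j) :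
    Set.InjOn (fun b : Fin n → ZMod n => (b i, b j)) B := by
  intro b hb b' hb' hbb'
  by_contra hne
  have hagree : 1 < agreeCount b b' := by
    simp only [Prod.mk.injEq] at hbb'
    exact one_lt_card.mpr ⟨i, by simp [hbb'.1], j, by simp [hbb'.2], hij⟩
  exact (hB b hb b' hb' hne).not_gt hagree

theorem sum_apply_eq_nsmul [NeZero n] {M : Type*} [AddCommMonoid M] (hB : PlaneCode B)
    (hcard : B.card = n ^ 2) {i j : Fin n} (hij : i ≠ j) (f : ZMod n → M) :
    ∑ b ∈ B, f (b j) = n • ∑ c, f c := by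
  have hinj := hB.injOn_apply_pair hij
  have himage : B.image (fun b => (b i, b j)) = univ :=
    eq_univ_of_card _ (by rw [card_image_of_injOn hinj, hcard, Fintype.card_prod, ZMod.card, sq])
  calc ∑ b ∈ B, f (b j) = ∑ p ∈ B.image (fun b => (b i, b j)), f p.2 :=
      (sum_image (f := fun p => f p.2) hinj).symm
    _ = ∑ p : ZMod n × ZMod n, f p.2 := by rw [himage]
    _ = n • ∑ c, f c := by
      simp only [Fintype.sum_prod_type, sum_const, card_univ, ZMod.card]

end PlaneCode

theorem plane_code_character_sum_one (n : ℕ) (hn : 1 ≤ n)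
    (B : Finset (Fin n → ZMod n)) (hcard : B.card = n ^ 2) (hB : PlaneCode B)
    (ζ : ℂ) (hζ : ζ = Complex.exp (2 * Real.pi * Complex.I / n))
    (j : Fin n) (m : ZMod n) (hm : m ≠ 0) :
    ∑ b ∈ B, ζ ^ (m * b j).val = 0 := by
  obtain rfl | hn1 := hn.eq_or_lt
  · exact absurd (Subsingleton.elim m 0) hm
  have : NeZero n := ⟨by omega⟩
  have hprim : IsPrimitiveRoot ζ n := hζ ▸ Complex.isPrimitiveRoot_exp n (NeZero.ne n)
  obtain ⟨i, hij⟩ : ∃ i : Fin n, i ≠ j :=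
    Fintype.exists_ne_of_one_lt_card (by simpa using hn1) j
  rw [hB.sum_apply_eq_nsmul hcard hij fun c => ζ ^ (m * c).val,
    hprim.sum_pow_val_mul_eq_zero hm, smul_zero]
end

section
/- Let n ≥ 1, let ζ = exp(2πi/n) ∈ ℂ, and let B₀ ⊆ (ZMod n)^n be a finite set of vectors. Let D be the set of all d ∈ (ZMod n)^n such that for every v ∈ B₀ the difference d - v has at most one coordinate equal to 0. Suppose there exists a function h : (ZMod n)^n → ℂ which is a finite linear combination (with complex coefficients) of functions of the form z ↦ ζ^{k·z_i + m·z_j} with i, j ∈ Fin n, k, m ∈ ZMod n, (k, m) ≠ (0, 0), together with functions of the form z ↦ ζ^{m·z_j} with j ∈ Fin n, m ∈ ZMod n, m ≠ 0, and such that Σ_{v ∈ B₀} h(v) = 1 and for every d ∈ D the value h(d) is a nonnegative real number. Then there is no set B ⊆ (ZMod n)^n with B₀ ⊆ B, |B| = n², and the plane code property. -/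
/-!
If `B` is a plane code with `n²` elements, then for `i ≠ j` the projection `b ↦ (b i, b j)` is
injective on `B`, hence a bijection onto `(ZMod n)²`. Summing a nontrivial character
`z ↦ ζ^(k z_i + m z_j)` over `B` is therefore a full character sum over `(ZMod n)²`, which
vanishes; so every `h` in the span sums to `0` over `B`. On the other hand, every element of
`B \ B₀` lies in `D`, so `∑_B h = ∑_{B₀} h + ∑_{B \ B₀} h = 1 + (something ≥ 0) ≠ 0`.
-/

open Finset

theorem AddChar.sum_linear_pair_eq_zero {R R' : Type*} [CommRing R] [Fintype R] [DecidableEq R]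
    [CommRing R'] [IsDomain R'] {ψ : AddChar R R'} (hψ : ψ.IsPrimitive) {k m : R}
    (hkm : (k, m) ≠ (0, 0)) : ∑ p : R × R, ψ (k * p.1 + m * p.2) = 0 := by
  simp_rw [map_add_eq_mul, mul_comm k, mul_comm m, Fintype.sum_prod_type, ← Fintype.sum_mul_sum,
    AddChar.sum_mulShift _ hψ]
  by_cases hk : k = 0
  · simp [hk, show m ≠ 0 by rintro rfl; exact hkm (by rw [hk])]
  · simp [hk]

def planeCharacters (n : ℕ) (ζ : ℂ) : Set ((Fin n → ZMod n) → ℂ) :=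
  {f | ∃ i j : Fin n, ∃ k m : ZMod n,
      i ≠ j ∧ (k, m) ≠ (0, 0) ∧ f = fun z => ζ ^ (k * z i + m * z j).val} ∪
  {f | ∃ j : Fin n, ∃ m : ZMod n, m ≠ 0 ∧ f = fun z => ζ ^ (m * z j).val}

theorem exists_ne_of_zmod_ne_zero {n : ℕ} (j : Fin n) {m : ZMod n} (hm : m ≠ 0) :
    ∃ i, i ≠ j := by
  have : 1 < n := by
    by_contra! hn
    obtain rfl : n = 1 := by have := j.pos; omega
    exact hm (Subsingleton.elim m 0)
  exact Fintype.exists_ne_of_one_lt_card (by rwa [Fintype.card_fin]) j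

section PlaneCode

variable {n : ℕ} {B : Finset (Fin n → ZMod n)}

theorem PlaneCode.injOn_eval_pair (hB : PlaneCode B) {i j : Fin n} (hij : i ≠ j) :
    Set.InjOn (fun b : Fin n → ZMod n => (b i, b j)) B := by
  intro b hb b' hb' hbb'
  by_contra hne
  obtain ⟨hi, hj⟩ : b i = b' i ∧ b j = b' j := Prod.ext_iff.1 hbb'
  have hagree : 1 < agreeCount b b' :=
    one_lt_card.2 ⟨i, by simp [hi], j, by simp [hj], hij⟩
  exact (hB b hb b' hb' hne).not_gt hagree

theorem PlaneCode.sum_eval_pair [NeZero n] {M : Type*} [AddCommMonoid M] (hB : PlaneCode B)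
    (hcard : B.card = n ^ 2) {i j : Fin n} (hij : i ≠ j) (f : ZMod n × ZMod n → M) :
    ∑ b ∈ B, f (b i, b j) = ∑ p, f p := by
  have hinj := hB.injOn_eval_pair hij
  have himage : B.image (fun b => (b i, b j)) = univ := by
    apply eq_univ_of_card
    rw [card_image_of_injOn hinj, hcard, Fintype.card_prod, ZMod.card, sq]
  rw [← sum_image hinj, himage]

theorem PlaneCode.sum_character_eq_zero {ζ : ℂ} (hζ : IsPrimitiveRoot ζ n) (hB : PlaneCode B)
    (hcard : B.card = n ^ 2) {i j : Fin n} (hij : i ≠ j) {k m : ZMod n}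
    (hkm : (k, m) ≠ (0, 0)) : ∑ b ∈ B, ζ ^ (k * b i + m * b j).val = 0 := by
  have : NeZero n := ⟨i.pos.ne'⟩
  let ψ := AddChar.zmodChar n hζ.pow_eq_one
  have hψ : ψ.IsPrimitive := AddChar.zmodChar_primitive_of_primitive_root n hζ
  calc ∑ b ∈ B, ζ ^ (k * b i + m * b j).val
      = ∑ b ∈ B, ψ (k * b i + m * b j) := by simp only [ψ, AddChar.zmodChar_apply]
    _ = ∑ p : ZMod n × ZMod n, ψ (k * p.1 + m * p.2) :=
      hB.sum_eval_pair hcard hij fun p => ψ (k * p.1 + m * p.2)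
    _ = 0 := AddChar.sum_linear_pair_eq_zero hψ hkm

theorem PlaneCode.sum_eq_zero_of_mem_span {ζ : ℂ} (hζ : IsPrimitiveRoot ζ n) (hB : PlaneCode B)
    (hcard : B.card = n ^ 2)
    {f : (Fin n → ZMod n) → ℂ} (hf : f ∈ Submodule.span ℂ (planeCharacters n ζ)) :
    ∑ b ∈ B, f b = 0 := by
  induction hf using Submodule.span_induction with
  | mem f hf =>
    rcases hf with ⟨i, j, k, m, hij, hkm, rfl⟩ | ⟨j, m, hm, rfl⟩
    · exact hB.sum_character_eq_zero hζ hcard hij hkm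
    -- `z ↦ ζ^(m z_j)` is the pair character with `k = 0` for any second coordinate `i`
    · obtain ⟨i, hij⟩ := exists_ne_of_zmod_ne_zero j hm
      simpa using hB.sum_character_eq_zero hζ hcard hij (k := 0) (by simp [hm])
  | zero => simp
  | add f g _ _ hf hg => simp [sum_add_distrib, hf, hg]
  | smul c f _ hf => simp [← mul_sum, hf]

end PlaneCode

open ComplexOrder in
theorem plane_code_witness_obstruction (n : ℕ) (hn : 1 ≤ n)
    (ζ : ℂ) (hζ : ζ = Complex.exp (2 * Real.pi * Complex.I / n))
    (B₀ : Finset (Fin n → ZMod n))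
    (D : Set (Fin n → ZMod n))
    (hD : D = {d | ∀ v ∈ B₀, agreeCount d v ≤ 1})
    (h : (Fin n → ZMod n) → ℂ)
    (hspan : h ∈ Submodule.span ℂ (
        {f : (Fin n → ZMod n) → ℂ | ∃ i j : Fin n, ∃ k m : ZMod n,
            i ≠ j ∧ (k, m) ≠ (0, 0) ∧ f = fun z => ζ ^ (k * z i + m * z j).val} ∪
        {f : (Fin n → ZMod n) → ℂ | ∃ j : Fin n, ∃ m : ZMod n,
            m ≠ 0 ∧ f = fun z => ζ ^ (m * z j).val}))
    (hsum : ∑ v ∈ B₀, h v = 1)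
    (hpos : ∀ d ∈ D, 0 ≤ h d) :
    ¬ ∃ B : Finset (Fin n → ZMod n), B₀ ⊆ B ∧ B.card = n ^ 2 ∧ PlaneCode B := by
  rintro ⟨B, hB₀B, hcard, hB⟩
  have hprim : IsPrimitiveRoot ζ n := hζ ▸ Complex.isPrimitiveRoot_exp n (by omega)
  have hB_sum : ∑ b ∈ B, h b = 0 := hB.sum_eq_zero_of_mem_span hprim hcard hspan
  have hrest : 0 ≤ ∑ d ∈ B \ B₀, h d := by
    refine sum_nonneg fun d hd => hpos d ?_
    obtain ⟨hdB, hdB₀⟩ := mem_sdiff.1 hd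
    rw [hD]
    exact fun v hv => hB d hdB v (hB₀B hv) (ne_of_mem_of_not_mem hv hdB₀).symm
  have hsplit : ∑ d ∈ B \ B₀, h d + 1 = 0 := by
    rw [← hsum, sum_sdiff hB₀B, hB_sum]
  exact (add_pos_of_nonneg_of_pos hrest one_pos).ne' hsplit
end

section
/- For any types P and L equipped with a membership relation making (P, L) a projective plane in which P and L are finite (nondegenerate: there exist four points no three of which are collinear), the order of the projective plane is not equal to 6. -/
/-!
The Bruck–Ryser argument. If `N` is the incidence matrix of a projective plane of order `n`, then
`N Nᵀ = n I + J`, i.e. `∑ₗ (∑_{p ∈ l} xₚ)² = n ∑ₚ xₚ² + (∑ₚ xₚ)²` as quadratic forms over `ℚ`.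
For `n ≡ 1, 2 mod 4` the number `n² + n + 2` of points plus one is divisible by `4`, so Lagrange's
four-square theorem and Euler's identity give a rational change of variables turning
`n ∑ xⱼ²` (one extra variable `x₀`) into a plain sum of squares `∑ zⱼ²`. Matching lines with
points and choosing the `zⱼ` one at a time so that each line form equals `± zⱼ` cancels everything
except `n x₀² = z₀² + (∑ₚ xₚ)²`, with `z₀ = 1`. Hence `n` is a sum of two rational squares,
hence of two integer squares; `6` is not.
-/

open Finset Matrix
open scoped Kronecker

theorem Nat.exists_sq_add_sq_of_mul_sq_eq_sq_add_sq {n e a b : ℕ} (he : e ≠ 0)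
    (h : n * e ^ 2 = a ^ 2 + b ^ 2) : ∃ x y : ℕ, n = x ^ 2 + y ^ 2 := by
  rcases eq_or_ne n 0 with rfl | hn
  · exact ⟨0, 0, rfl⟩
  have hne : n * e ^ 2 ≠ 0 := by positivity
  have key := Nat.eq_sq_add_sq_iff.mp ⟨a, b, h⟩
  refine Nat.eq_sq_add_sq_iff.mpr fun q hq hq4 => ?_
  have : Fact q.Prime := ⟨Nat.prime_of_mem_primeFactors hq⟩
  have hq' : q ∈ (n * e ^ 2).primeFactors :=
    Nat.primeFactors_mono (dvd_mul_right n _) hne hq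
  have := key q hq' hq4
  rw [padicValNat.mul hn (by positivity), padicValNat.pow] at this
  simpa [parity_simps] using this

theorem Nat.exists_sq_add_sq_of_cast_eq_sq_add_sq {n : ℕ} {r t : ℚ}
    (h : (n : ℚ) = r ^ 2 + t ^ 2) : ∃ x y : ℕ, n = x ^ 2 + y ^ 2 := by
  have hr : (r.num : ℚ) = r * r.den := (Rat.mul_den_eq_num r).symm
  have ht : (t.num : ℚ) = t * t.den := (Rat.mul_den_eq_num t).symm
  have hq : (n : ℚ) * (r.den * t.den) ^ 2 = (r.num * t.den) ^ 2 + (t.num * r.den) ^ 2 := by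
    rw [hr, ht, h]; ring
  have hz : (n : ℤ) * (r.den * t.den : ℕ) ^ 2
      = (r.num * t.den).natAbs ^ 2 + (t.num * r.den).natAbs ^ 2 := by
    simp only [Int.natAbs_sq]; exact_mod_cast hq
  exact Nat.exists_sq_add_sq_of_mul_sq_eq_sq_add_sq (mul_ne_zero r.den_nz t.den_nz)
    (by exact_mod_cast hz)

theorem Matrix.dotProduct_mulVec_self_of_transpose_mul_self {κ K : Type*} [Fintype κ]
    [DecidableEq κ] [CommRing K] {A : Matrix κ κ K} {m : K} (hA : Aᵀ * A = m • 1)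
    (v : κ → K) : A *ᵥ v ⬝ᵥ A *ᵥ v = m * (v ⬝ᵥ v) := by
  rw [dotProduct_mulVec, ← mulVec_transpose, mulVec_mulVec, hA, smul_mulVec, one_mulVec,
    smul_dotProduct, smul_eq_mul]

theorem Matrix.exists_transpose_mul_self_eq_smul_one {κ K : Type*} [Fintype κ] [DecidableEq κ]
    [CommRing K] (hκ : 4 ∣ Fintype.card κ) (a b c d : K) :
    ∃ A : Matrix κ κ K, Aᵀ * A = (a ^ 2 + b ^ 2 + c ^ 2 + d ^ 2) • 1 := by
  set A₄ : Matrix (Fin 4) (Fin 4) K := !![a, -b, -c, -d; b, a, -d, c; c, d, a, -b; d, -c, b, a]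
  have hA₄ : A₄ᵀ * A₄ = (a ^ 2 + b ^ 2 + c ^ 2 + d ^ 2) • 1 := by
    ext i j
    fin_cases i <;> fin_cases j <;> simp [A₄, mul_apply, Fin.sum_univ_four] <;> ring
  obtain ⟨k, hk⟩ := hκ
  let e : κ ≃ Fin k × Fin 4 := Fintype.equivOfCardEq (by simp [hk, mul_comm])
  have hB : (1 ⊗ₖ A₄ : Matrix (Fin k × Fin 4) _ K)ᵀ * (1 ⊗ₖ A₄)
      = (a ^ 2 + b ^ 2 + c ^ 2 + d ^ 2) • (1 : Matrix (Fin k × Fin 4) _ K) := by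
    rw [← kroneckerMap_transpose, transpose_one, ← mul_kronecker_mul, one_mul, hA₄,
      kronecker_smul, one_kronecker_one]
  refine ⟨reindex e.symm e.symm (1 ⊗ₖ A₄), ?_⟩
  rw [transpose_reindex, reindex_apply, reindex_apply, submatrix_mul_equiv, hB]
  ext i j
  simp [one_apply]

theorem exists_apply_eq_one_and_sq_eq_sq {K κ : Type*} [Field K] [DecidableEq κ]
    (h2 : (2 : K) ≠ 0) {u : κ} {s : Finset κ} (hu : u ∉ s) (y : κ → (κ → K) →ₗ[K] K) :
    ∃ v : κ → K, v u = 1 ∧ ∀ i ∈ s, y i v ^ 2 = v i ^ 2 := by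
  induction s using Finset.induction_on generalizing y with
  | empty => exact ⟨Pi.single u 1, by simp, by simp⟩
  | insert a s ha ih =>
    have hua : u ≠ a := fun h => hu (h ▸ mem_insert_self u s)
    set c := y a (Pi.single a 1)
    obtain ⟨ε, hε, hεc⟩ : ∃ ε : K, ε ^ 2 = 1 ∧ ε - c ≠ 0 := by
      by_cases hc : c = 1
      · refine ⟨-1, by norm_num, ?_⟩
        rw [hc]
        intro h
        exact h2 (by linear_combination -h)
      · exact ⟨1, one_pow 2, sub_ne_zero.mpr (Ne.symm hc)⟩
    let S : (κ → K) →ₗ[K] (κ → K) := LinearMap.id + LinearMap.toSpanSingleton K _ (Pi.single a 1)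
      ∘ₗ ((ε - c)⁻¹ • (y a - ε • LinearMap.proj a))
    have hS : ∀ v, S v = v + ((ε - c)⁻¹ * (y a v - ε * v a)) • Pi.single a 1 := fun v => rfl
    obtain ⟨v, hvu, hv⟩ := ih (fun h => hu (mem_insert_of_mem h)) (fun i => y i ∘ₗ S)
    have hSa : y a (S v) = ε * S v a := by
      rw [hS, map_add, map_smul]
      simp only [Pi.add_apply, Pi.smul_apply, Pi.single_eq_same, smul_eq_mul]
      field_simp
      ring
    refine ⟨S v, by simp [hS, hvu, hua], ?_⟩
    intro i hi
    rcases mem_insert.mp hi with rfl | hi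
    · rw [hSa, mul_pow, hε, one_mul]
    · have hia : i ≠ a := fun h => ha (h ▸ hi)
      simpa [hS, hia] using hv i hi

namespace Configuration.ProjectivePlane

variable {P L : Type*} [Membership P L] [ProjectivePlane P L] [Fintype P] [Fintype L]
  [DecidableEq P] [∀ l : L, DecidablePred (· ∈ l)]

variable (L) in
theorem card_filter_mem_and_mem (p q : P) :
    #{l : L | p ∈ l ∧ q ∈ l} = if p = q then order P L + 1 else 1 := by
  split_ifs with hpq
  · subst hpq
    rw [← lineCount_eq L p, lineCount, Nat.card_eq_fintype_card, Fintype.card_subtype]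
    simp
  · obtain ⟨l, hl, huniq⟩ := HasLines.existsUnique_line P L p q hpq
    exact card_eq_one.mpr ⟨l, by ext m; simpa using ⟨huniq m, fun h => h ▸ hl⟩⟩

theorem sum_sq_sum_mem {R : Type*} [CommRing R] (f : P → R) :
    ∑ l : L, (∑ p with p ∈ l, f p) ^ 2 = order P L * ∑ p, f p ^ 2 + (∑ p, f p) ^ 2 := by
  calc ∑ l : L, (∑ p with p ∈ l, f p) ^ 2
      = ∑ p, ∑ q, (#{l : L | p ∈ l ∧ q ∈ l} : R) * (f p * f q) := by
        simp only [sq, sum_filter, sum_mul_sum]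
        rw [sum_comm]
        refine sum_congr rfl fun p _ => ?_
        rw [sum_comm]
        refine sum_congr rfl fun q _ => ?_
        rw [natCast_card_filter, sum_mul]
        refine sum_congr rfl fun l _ => ?_
        by_cases hp : p ∈ l <;> by_cases hq : q ∈ l <;> simp [hp, hq]
    _ = ∑ p, ∑ q, (f p * f q + if p = q then order P L * (f p * f q) else 0) := by
        refine sum_congr rfl fun p _ => sum_congr rfl fun q _ => ?_
        rw [card_filter_mem_and_mem]
        split_ifs <;> push_cast <;> ring
    _ = order P L * ∑ p, f p ^ 2 + (∑ p, f p) ^ 2 := by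
        simp only [sum_add_distrib, sum_ite_eq, mem_univ, if_true, ← sum_mul_sum, mul_sum, sq]
        ring

end Configuration.ProjectivePlane

theorem Configuration.ProjectivePlane.exists_rat_order_mul_sq_eq_one_add_sq (P L : Type*)
    [Membership P L] [ProjectivePlane P L] [Fintype P] [Fintype L]
    (h : order P L % 4 = 1 ∨ order P L % 4 = 2) :
    ∃ s w : ℚ, order P L * s ^ 2 = 1 + w ^ 2 := by
  classical
  -- coordinates: one per point, plus the extra coordinate `none`
  have h4 : 4 ∣ Fintype.card (Option P) := by
    rw [Fintype.card_option, card_points P L, Nat.dvd_iff_mod_eq_zero]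
    rcases h with h | h <;> simp [Nat.add_mod, Nat.pow_mod, h]
  set n := order P L
  have hn : (n : ℚ) ≠ 0 := by
    have := one_lt_order P L
    positivity
  obtain ⟨a, b, c, d, habcd⟩ := Nat.sum_four_squares n
  obtain ⟨A, hA⟩ := exists_transpose_mul_self_eq_smul_one (K := ℚ) h4 a b c d
  set X := (n : ℚ)⁻¹ • A
  have hX : Xᵀ * X = (n : ℚ)⁻¹ • 1 := by
    rw [transpose_smul, smul_mul_smul, hA, smul_smul, ← habcd]
    push_cast at hn ⊢
    field_simp
  let e : P ≃ L := Fintype.equivOfCardEq (card_points_eq_card_lines P L)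
  let y : Option P → (Option P → ℚ) →ₗ[ℚ] ℚ := fun j => j.elim 0 fun p =>
    (∑ q with q ∈ e p, LinearMap.proj (some q)) ∘ₗ X.mulVecLin
  obtain ⟨v, hv1, hv⟩ := exists_apply_eq_one_and_sq_eq_sq two_ne_zero
    (u := none) (s := univ.map Function.Embedding.some) (by simp) y
  set x := X *ᵥ v
  have hlines : ∑ l : L, (∑ p with p ∈ l, x (some p)) ^ 2 = ∑ p, v (some p) ^ 2 := by
    rw [← e.sum_comp]
    refine sum_congr rfl fun p _ => ?_
    simpa [y, LinearMap.sum_apply] using hv (some p) (by simp)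
  have hnorm : n * (x none ^ 2 + ∑ p, x (some p) ^ 2) = 1 + ∑ p, v (some p) ^ 2 := by
    have := dotProduct_mulVec_self_of_transpose_mul_self hX v
    simp only [dotProduct, Fintype.sum_option, hv1, ← sq] at this
    rw [this]
    field_simp
  have hincidence := sum_sq_sum_mem (L := L) (fun p => x (some p))
  exact ⟨x none, ∑ p, x (some p), by linarith⟩

theorem Configuration.ProjectivePlane.exists_order_eq_sq_add_sq (P L : Type*) [Membership P L]
    [ProjectivePlane P L] [Fintype P] [Fintype L]
    (h : order P L % 4 = 1 ∨ order P L % 4 = 2) : ∃ a b : ℕ, order P L = a ^ 2 + b ^ 2 := by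
  obtain ⟨s, w, hsw⟩ := exists_rat_order_mul_sq_eq_one_add_sq P L h
  have hs : s ≠ 0 := by
    rintro rfl
    nlinarith
  exact Nat.exists_sq_add_sq_of_cast_eq_sq_add_sq (r := 1 / s) (t := w / s)
    (by field_simp; linarith)

theorem no_projective_plane_of_order_six (P L : Type*) [Membership P L]
    [Configuration.ProjectivePlane P L] [Fintype P] [Fintype L] :
    Configuration.ProjectivePlane.order P L ≠ 6 := by
  intro h6
  obtain ⟨a, b, hab⟩ :=
    Configuration.ProjectivePlane.exists_order_eq_sq_add_sq P L (by rw [h6]; right; rfl)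
  rw [h6] at hab
  have ha : a ≤ 2 := by nlinarith
  have hb : b ≤ 2 := by nlinarith
  interval_cases a <;> interval_cases b <;> omega
end

section
/- Let n ≥ 2. If there exists a complete set of n - 1 mutually orthogonal Latin squares of order n, then there exists a set B ⊆ (ZMod n)^n of exactly n² vectors with the plane code property. -/
/-- `S` is a Latin square of order `n`: every row and every column is a
bijection of `Fin n`. -/
def IsLatinSquare {n : ℕ} (S : Fin n → Fin n → Fin n) : Prop :=
  (∀ i, Function.Bijective (fun j => S i j)) ∧
  (∀ j, Function.Bijective (fun i => S i j))

/-- Two Latin squares are orthogonal if all ordered pairs of corresponding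
entries are distinct. -/
def IsOrthogonal {n : ℕ} (S₁ S₂ : Fin n → Fin n → Fin n) : Prop :=
  Function.Injective (fun p : Fin n × Fin n => (S₁ p.1 p.2, S₂ p.1 p.2))

open Finset Function

section CoordinateFamily

variable {ι α β γ : Type*} {c : ι → α → β}

theorem Pairwise.injective_pair_comp
    (hc : Pairwise fun s t => Injective fun a => (c s a, c t a)) {e : β → γ} (he : Injective e) :
    Pairwise fun s t => Injective fun a => (e (c s a), e (c t a)) :=
  fun _ _ hst _ _ h => hc hst (Prod.ext (he (congrArg Prod.fst h)) (he (congrArg Prod.snd h)))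

theorem Pairwise.injective_word [Nontrivial ι]
    (hc : Pairwise fun s t => Injective fun a => (c s a, c t a)) :
    Injective fun a s => c s a := by
  obtain ⟨s, t, hst⟩ := exists_pair_ne ι
  intro a a' h
  exact hc hst (Prod.ext (congrFun h s) (congrFun h t))

theorem Pairwise.card_filter_eq_le_one [Fintype ι] [DecidableEq β]
    (hc : Pairwise fun s t => Injective fun a => (c s a, c t a)) {a a' : α} (h : a ≠ a') :
    (univ.filter fun s => c s a = c s a').card ≤ 1 := by
  refine card_le_one.2 fun s hs t ht => ?_
  by_contra hst
  rw [mem_filter] at hs ht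
  exact h (hc hst (Prod.ext hs.2 ht.2))

end CoordinateFamily

theorem agreeCount_eq_card_filter_eq {n : ℕ} (b b' : Fin n → ZMod n) :
    agreeCount b b' = (univ.filter fun i => b i = b' i).card := by
  simp only [agreeCount, sub_eq_zero]

theorem planeCode_image_word {n : ℕ} {α : Type*} [Fintype α] {c : Fin n → α → ZMod n}
    (hc : Pairwise fun s t => Injective fun a => (c s a, c t a)) :
    PlaneCode (univ.image fun a s => c s a) := by
  simp only [PlaneCode, mem_image, mem_univ, true_and, forall_exists_index, forall_apply_eq_imp_iff]
  intro a a' hne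
  rw [agreeCount_eq_card_filter_eq]
  exact hc.card_filter_eq_le_one fun h => hne (h ▸ rfl)

theorem IsLatinSquare.injective_row_entry {n : ℕ} {S : Fin n → Fin n → Fin n}
    (hS : IsLatinSquare S) : Injective fun p : Fin n × Fin n => (p.1, S p.1 p.2) := by
  rintro ⟨i, j⟩ ⟨i', j'⟩ h
  obtain ⟨rfl, hij⟩ := Prod.ext_iff.1 h
  exact Prod.ext rfl ((hS.1 i).injective hij)

def molsCoord {m : ℕ} (S : Fin m → Fin (m + 1) → Fin (m + 1) → Fin (m + 1)) :
    Fin (m + 1) → Fin (m + 1) × Fin (m + 1) → Fin (m + 1) :=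
  Fin.cons Prod.fst fun k p => S k p.1 p.2

theorem pairwise_injective_molsCoord {m : ℕ} {S : Fin m → Fin (m + 1) → Fin (m + 1) → Fin (m + 1)}
    (hS : ∀ k, IsLatinSquare (S k)) (horth : ∀ k l, k ≠ l → IsOrthogonal (S k) (S l)) :
    Pairwise fun s t => Injective fun p => (molsCoord S s p, molsCoord S t p) := by
  intro s t hst
  cases s using Fin.cases with
  | zero =>
    cases t using Fin.cases with
    | zero => exact absurd rfl hst
    | succ l => exact (hS l).injective_row_entry
  | succ k =>
    cases t using Fin.cases with
    | zero => exact Prod.swap_injective.comp (hS k).injective_row_entry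
    | succ l => exact horth k l fun h => hst (h ▸ rfl)

theorem plane_code_of_mols (n : ℕ) (hn : 2 ≤ n)
    (S : Fin (n - 1) → Fin n → Fin n → Fin n)
    (hS : ∀ k, IsLatinSquare (S k))
    (horth : ∀ k l, k ≠ l → IsOrthogonal (S k) (S l)) :
    ∃ B : Finset (Fin n → ZMod n), B.card = n ^ 2 ∧ PlaneCode B := by
  obtain ⟨m, rfl⟩ : ∃ m, n = m + 1 := ⟨n - 1, by omega⟩
  have : Nontrivial (Fin (m + 1)) := Fin.nontrivial_iff_two_le.2 hn
  have hc := (pairwise_injective_molsCoord (m := m) hS horth).injective_pair_comp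
    (ZMod.finEquiv (m + 1)).injective
  refine ⟨univ.image fun p s => ZMod.finEquiv (m + 1) (molsCoord (m := m) S s p), ?_,
    planeCode_image_word hc⟩
  rw [card_image_of_injective _ hc.injective_word, card_univ, Fintype.card_prod,
    Fintype.card_fin, sq]
end

section
/- Let n ≥ 2. If there exists a set B ⊆ (ZMod n)^n of exactly n² vectors with the plane code property, then there exists a complete set of n - 1 mutually orthogonal Latin squares of order n. -/
/-
Read each word of `B` as a point and each coordinate `i` as a parallel class of lines
`{b | b i = a}`; two points share at most one line, so any two coordinates parametrize `B` by
`(ZMod n)²`. A point `c` off a line meets exactly `n - 1` of its `n` points, one through each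
other coordinate, so exactly one point of the line agrees with `c` nowhere. Hence "equal or
agreeing nowhere" is an equivalence relation with `n` classes of size `n`, a new coordinate in
which `B` still has the plane code property. Of the `n + 1` coordinates, two parametrize `B`
and the other `n - 1`, read in that parametrization, are mutually orthogonal Latin squares.
-/

open Function Finset

variable {P ι α : Type*}

def PairwiseInjective (f : ι → P → α) : Prop :=
  Pairwise fun i j ↦ Injective fun p ↦ (f i p, f j p)

def Parallel (f : ι → P → α) (p q : P) : Prop :=
  p = q ∨ ∀ j, f j p ≠ f j q

lemma PlaneCode.pairwiseInjective {n : ℕ} {B : Finset (Fin n → ZMod n)} (hB : PlaneCode B) :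
    PairwiseInjective fun (i : Fin n) (b : B) ↦ (b : Fin n → ZMod n) i := by
  intro i j hij b b' hbb'
  simp only [Prod.mk.injEq] at hbb'
  by_contra hne
  have hsub : {i, j} ⊆ univ.filter fun t ↦ b.1 t - b'.1 t = 0 := by
    simp [insert_subset_iff, hbb']
  have := (card_le_card hsub).trans (hB b b.2 b' b'.2 (Subtype.coe_ne_coe.2 hne))
  rw [card_pair hij] at this
  omega

namespace PairwiseInjective

variable [Fintype P] [Fintype α] {f : ι → P → α}

lemma bijective (hf : PairwiseInjective f) (hP : Fintype.card P = Fintype.card α ^ 2)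
    {i j : ι} (hij : i ≠ j) : Bijective fun p ↦ (f i p, f j p) :=
  (Fintype.bijective_iff_injective_and_card _).2 ⟨hf hij, by simp [hP, sq]⟩

lemma card_filter_eq [DecidableEq α] [Nontrivial ι] (hf : PairwiseInjective f)
    (hP : Fintype.card P = Fintype.card α ^ 2) (i : ι) (a : α) :
    #{r | f i r = a} = Fintype.card α := by
  obtain ⟨j, hij⟩ := exists_ne i
  have hbij := hf.bijective hP hij.symm
  refine card_nbij (f j) (fun _ _ ↦ mem_univ _) (fun r hr r' hr' h ↦ hbij.1 ?_) fun b _ ↦ ?_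
  · simp_all
  · obtain ⟨r, hr⟩ := hbij.2 (a, b)
    simp only [Prod.ext_iff] at hr
    exact ⟨r, by simpa using hr.1, hr.2⟩

variable [Fintype ι]

/-- A word `p` off the line `{r | f i r = a}` agrees with exactly one word of the line in
each coordinate `j ≠ i`; as the line has `card α = card ι` words, exactly one is left over. -/
lemma existsUnique_forall_ne (hf : PairwiseInjective f)
    (hP : Fintype.card P = Fintype.card α ^ 2) (hι : Fintype.card ι = Fintype.card α)
    {p : P} {i : ι} {a : α} (ha : f i p ≠ a) :
    ∃! r, f i r = a ∧ ∀ j, f j r ≠ f j p := by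
  classical
  have : Nontrivial ι := by
    rw [← Fintype.one_lt_card_iff_nontrivial, hι, Fintype.one_lt_card_iff]
    exact ⟨_, _, ha⟩
  have hφ : ∀ j, ∃ r, j ≠ i → f i r = a ∧ f j r = f j p := fun j ↦ by
    by_cases hj : j = i
    · exact ⟨p, fun h ↦ (h hj).elim⟩
    · obtain ⟨r, hr⟩ := (hf.bijective hP (Ne.symm hj)).2 (a, f j p)
      exact ⟨r, fun _ ↦ Prod.ext_iff.1 hr⟩
  choose φ hφ using hφ
  have hφ_inj : Set.InjOn φ (univ.erase i : Finset ι) := fun j hj k hk hjk ↦ by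
    replace hj := ne_of_mem_erase (mem_coe.1 hj)
    replace hk := ne_of_mem_erase (mem_coe.1 hk)
    by_contra hne
    have hφp : φ j = p := hf hne (Prod.ext (hφ j hj).2 (hjk ▸ (hφ k hk).2))
    exact ha (hφp ▸ (hφ j hj).1)
  have hφ_maps : Set.MapsTo φ (univ.erase i : Finset ι) (({r | f i r = a} : Finset P) : Set P) :=
    fun j hj ↦ by simp_all
  have hcard : #({r | f i r = a} : Finset P) = #(univ.erase i) + 1 := by
    rw [hf.card_filter_eq hP, card_erase_of_mem (mem_univ i), card_univ, hι]
    have := Fintype.card_pos (α := ι)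
    omega
  refine (existsUnique_congr fun r ↦ ?_).1
    (existsUnique_notMem_image_of_injOn_of_card_eq_add_one hφ_inj hφ_maps hcard)
  simp only [mem_filter_univ, mem_image, mem_erase, mem_univ, and_true, not_exists, not_and,
    and_congr_right_iff]
  intro hr
  constructor
  · intro hφr j hj
    have hji : j ≠ i := by rintro rfl; exact ha (hj ▸ hr)
    exact hφr j hji <| hf hji.symm <|
      Prod.ext ((hφ j hji).1.trans hr.symm) ((hφ j hji).2.trans hj.symm)
  · rintro hr' j hj rfl
    exact hr' j (hφ j hj).2

lemma eq_of_parallel (hf : PairwiseInjective f)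
    (hP : Fintype.card P = Fintype.card α ^ 2) (hι : Fintype.card ι = Fintype.card α)
    {p q r : P} (hp : Parallel f p r) (hq : Parallel f q r)
    {j : ι} (hpq : f j p = f j q) : p = q := by
  rcases hp with rfl | hp
  · exact (hq.resolve_right fun h ↦ h j hpq.symm).symm
  rcases hq with rfl | hq
  · exact (hp j hpq).elim
  exact (hf.existsUnique_forall_ne hP hι (hp j).symm).unique ⟨rfl, hp⟩ ⟨hpq.symm, hq⟩

/-- The new coordinate of a word is the `i₁`-coordinate of its unique parallel on the line
`{r | f i₀ r = a₀}`. -/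
theorem exists_pairwiseInjective_option_elim [Nontrivial ι] (hf : PairwiseInjective f)
    (hP : Fintype.card P = Fintype.card α ^ 2) (hι : Fintype.card ι = Fintype.card α) :
    ∃ e : P → α, PairwiseInjective fun o : Option ι ↦ o.elim e f := by
  obtain ⟨i₀, i₁, h₀₁⟩ := exists_pair_ne ι
  obtain ⟨a₀⟩ : Nonempty α := Fintype.card_pos_iff.1 (hι ▸ Fintype.card_pos)
  have hpar : ∀ p, ∃ r, f i₀ r = a₀ ∧ Parallel f p r := fun p ↦ by
    by_cases hp : f i₀ p = a₀
    · exact ⟨p, hp, .inl rfl⟩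
    · obtain ⟨r, ⟨hr, hpr⟩, -⟩ := hf.existsUnique_forall_ne hP hι hp
      exact ⟨r, hr, .inr fun j h ↦ hpr j h.symm⟩
  choose par hpar₀ hpar using hpar
  have key : ∀ j, Injective fun p ↦ (f i₁ (par p), f j p) := fun j p q hpq ↦ by
    have : par p = par q :=
      hf h₀₁ (Prod.ext ((hpar₀ p).trans (hpar₀ q).symm) (Prod.ext_iff.1 hpq).1)
    exact hf.eq_of_parallel hP hι (hpar p) (this ▸ hpar q) (Prod.ext_iff.1 hpq).2
  refine ⟨fun p ↦ f i₁ (par p), ?_⟩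
  rintro (_ | i) (_ | j) hij
  · exact (hij rfl).elim
  · exact key j
  · exact Prod.swap_injective.comp (key i)
  · exact hf (Option.some_injective _ |>.ne_iff.1 hij)

end PairwiseInjective

section LatinSquare

noncomputable def latinSquareOf {m : ℕ} (σ : α ≃ Fin m) (E : P ≃ α × α) (c : P → α) :
    Fin m → Fin m → Fin m :=
  fun x y ↦ σ (c (E.symm (σ.symm x, σ.symm y)))

variable {m : ℕ} {σ : α ≃ Fin m} {E : P ≃ α × α} {c d : P → α}

lemma isLatinSquare_latinSquareOf (h₁ : Injective fun p ↦ ((E p).1, c p))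
    (h₂ : Injective fun p ↦ ((E p).2, c p)) : IsLatinSquare (latinSquareOf σ E c) := by
  refine ⟨fun x ↦ Finite.injective_iff_bijective.1 fun y y' h ↦ ?_,
    fun y ↦ Finite.injective_iff_bijective.1 fun x x' h ↦ ?_⟩
  · simpa using h₁ (Prod.ext (by simp) (σ.injective h))
  · simpa using h₂ (Prod.ext (by simp) (σ.injective h))

lemma isOrthogonal_latinSquareOf (hcd : Injective fun p ↦ (c p, d p)) :
    IsOrthogonal (latinSquareOf σ E c) (latinSquareOf σ E d) := by
  intro x y h
  simp only [latinSquareOf, Prod.mk.injEq, EmbeddingLike.apply_eq_iff_eq] at h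
  simpa [Prod.ext_iff] using hcd (Prod.ext h.1 h.2)

end LatinSquare

theorem mols_of_plane_code (n : ℕ) (hn : 2 ≤ n)
    (B : Finset (Fin n → ZMod n)) (hcard : B.card = n ^ 2) (hB : PlaneCode B) :
    ∃ S : Fin (n - 1) → Fin n → Fin n → Fin n,
      (∀ k, IsLatinSquare (S k)) ∧
      (∀ k l, k ≠ l → IsOrthogonal (S k) (S l)) := by
  have : NeZero n := ⟨by omega⟩
  have : Nontrivial (Fin n) := Fin.nontrivial_iff_two_le.2 hn
  have hP : Fintype.card B = Fintype.card (ZMod n) ^ 2 := by simp [hcard]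
  obtain ⟨e, he⟩ := hB.pairwiseInjective.exists_pairwiseInjective_option_elim hP (by simp)
  let F : Option (Fin n) → B → ZMod n := fun o ↦ o.elim e fun i b ↦ b.1 i
  let i₀ : Option (Fin n) := some 0
  let i₁ : Option (Fin n) := some 1
  have h₀₁ : i₀ ≠ i₁ := by simp [i₀, i₁]; omega
  let κ := {o // o ∉ ({i₀, i₁} : Finset (Option (Fin n)))}
  have hκ : Fintype.card κ = n - 1 := by
    rw [Fintype.card_subtype_compl, Fintype.card_coe, card_pair h₀₁, Fintype.card_option,
      Fintype.card_fin]
    omega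
  obtain ⟨τ⟩ := Fintype.card_eq.1 (hκ.trans (Fintype.card_fin _).symm)
  let E : B ≃ ZMod n × ZMod n := .ofBijective _ (he.bijective hP h₀₁)
  let σ : ZMod n ≃ Fin n := (ZMod.finEquiv n).symm
  refine ⟨fun k ↦ latinSquareOf σ E (F (τ.symm k)), fun k ↦ ?_, fun k l hkl ↦ ?_⟩
  · have hk : (τ.symm k : Option (Fin n)) ≠ i₀ ∧ (τ.symm k : Option (Fin n)) ≠ i₁ := by
      simpa [not_or] using (τ.symm k).2
    exact isLatinSquare_latinSquareOf (he hk.1.symm) (he hk.2.symm)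
  · exact isOrthogonal_latinSquareOf (he fun h ↦ hkl (τ.symm.injective (Subtype.ext h)))
end

section
/- Let n ≥ 2. If there exist types P and L with a membership relation making (P, L) a projective plane with P and L finite and of order n, then there exists a set B ⊆ (ZMod n)^n of exactly n² vectors with the plane code property. -/
open Configuration Configuration.ProjectivePlane

theorem agreeCount_le_one_iff {n : ℕ} {b b' : Fin n → ZMod n} :
    agreeCount b b' ≤ 1 ↔ ∀ i, b i = b' i → ∀ j, b j = b' j → i = j := by
  simp only [agreeCount, Finset.card_le_one, Finset.mem_filter, Finset.mem_univ, true_and,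
    sub_eq_zero]

theorem planeCode_image {n : ℕ} {A : Type*} [Fintype A] {c : A → Fin n → ZMod n}
    (hc : ∀ a b i j, i ≠ j → c a i = c b i → c a j = c b j → a = b) :
    PlaneCode (Finset.univ.image c) := by
  simp only [PlaneCode, Finset.mem_image, Finset.mem_univ, true_and]
  rintro _ ⟨a, rfl⟩ _ ⟨b, rfl⟩ hab
  rw [agreeCount_le_one_iff]
  intro i hi j hj
  by_contra hij
  exact hab (congrArg c (hc a b i j hij hi hj))

namespace Configuration

variable {P L : Type*} [Membership P L]

section HasLines

variable [HasLines P L] {ℓ : L}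

noncomputable def joinLine (a : {a : P // a ∉ ℓ}) (e : {e : P // e ∈ ℓ}) :
    {m : L // (e : P) ∈ m ∧ m ≠ ℓ} :=
  have hea := ne_of_mem_of_not_mem e.2 a.2
  ⟨HasLines.mkLine hea, (HasLines.mkLine_ax hea).1,
    ne_of_mem_of_not_mem' (HasLines.mkLine_ax hea).2 a.2⟩

theorem mem_joinLine (a : {a : P // a ∉ ℓ}) (e : {e : P // e ∈ ℓ}) :
    (a : P) ∈ (joinLine a e : L) :=
  (HasLines.mkLine_ax _).2

/-- If `a ≠ b`, both joins are the line `ab`, which would then meet `ℓ` in `e₁` and `e₂`. -/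
theorem eq_of_joinLine_eq {a b : {a : P // a ∉ ℓ}}
    {e₁ e₂ : {e : P // e ∈ ℓ}} (he : e₁ ≠ e₂) (h₁ : joinLine a e₁ = joinLine b e₁)
    (h₂ : joinLine a e₂ = joinLine b e₂) : a = b := by
  by_contra hab
  have hb₁ : (b : P) ∈ (joinLine a e₁ : L) := by rw [h₁]; exact mem_joinLine b e₁
  have hb₂ : (b : P) ∈ (joinLine a e₂ : L) := by rw [h₂]; exact mem_joinLine b e₂
  have hjoin : (joinLine a e₁ : L) = joinLine a e₂ :=
    (Nondegenerate.eq_or_eq (mem_joinLine a e₁) hb₁ (mem_joinLine a e₂) hb₂).resolve_left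
      (Subtype.coe_ne_coe.mpr hab)
  have he₂ : (e₂ : P) ∈ (joinLine a e₁ : L) := by rw [hjoin]; exact (joinLine a e₂).2.1
  exact (joinLine a e₁).2.2 <|
    (Nondegenerate.eq_or_eq (joinLine a e₁).2.1 he₂ e₁.2 e₂.2).resolve_left
      (Subtype.coe_ne_coe.mpr he)

end HasLines

namespace ProjectivePlane

variable [ProjectivePlane P L] [Finite P] [Finite L]

theorem card_pencil_ne {p : P} {ℓ : L} (hp : p ∈ ℓ) :
    Nat.card {m : L // p ∈ m ∧ m ≠ ℓ} = order P L := by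
  change Nat.card ↥({m : L | p ∈ m} \ {ℓ}) = _
  rw [Nat.card_coe_set_eq, Set.ncard_sdiff_singleton_of_mem (s := {m : L | p ∈ m}) hp]
  have hcount : Set.ncard {m : L | p ∈ m} = order P L + 1 := lineCount_eq L p
  omega

theorem card_points_notMem (ℓ : L) : Nat.card {a : P // a ∉ ℓ} = order P L ^ 2 := by
  have hsplit := Set.ncard_compl_add_ncard {p : P | p ∈ ℓ}
  have hℓ : Set.ncard {p : P | p ∈ ℓ} = order P L + 1 := pointCount_eq P ℓ
  cases nonempty_fintype P
  rw [Nat.card_eq_fintype_card, card_points P L] at hsplit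
  change Set.ncard {p : P | p ∈ ℓ}ᶜ = _
  omega

end ProjectivePlane

end Configuration

theorem plane_code_of_projective_plane_general (n : ℕ)
    (P L : Type*) [Membership P L] [Configuration.ProjectivePlane P L]
    [Fintype P] [Fintype L]
    (horder : Configuration.ProjectivePlane.order P L = n) :
    ∃ B : Finset (Fin n → ZMod n), B.card = n ^ 2 ∧ PlaneCode B := by
  classical
  have hn : 1 < n := horder ▸ one_lt_order P L
  have : NeZero n := ⟨by omega⟩
  have : Nontrivial (Fin n) := Fin.nontrivial_iff_two_le.mpr hn
  obtain ⟨-, -, -, -, ℓ, -⟩ := ProjectivePlane.exists_config (P := P) (L := L)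
  have hℓ : Nat.card {p : P // p ∈ ℓ} = n + 1 := horder ▸ pointCount_eq P ℓ
  let e : Fin n ↪ {p : P // p ∈ ℓ} :=
    Fin.castSuccEmb.trans (Finite.equivFinOfCardEq hℓ).symm.toEmbedding
  have label (i : Fin n) : {m : L // (e i : P) ∈ m ∧ m ≠ ℓ} ≃ ZMod n :=
    (Finite.card_eq.mp (by rw [card_pencil_ne (e i).2, horder, Nat.card_zmod])).some
  let c (a : {a : P // a ∉ ℓ}) (i : Fin n) : ZMod n := label i (joinLine a (e i))
  have hc : ∀ a b i j, i ≠ j → c a i = c b i → c a j = c b j → a = b := fun a b i j hij hi hj =>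
    eq_of_joinLine_eq (e.injective.ne hij) ((label i).injective hi) ((label j).injective hj)
  have hinj : Function.Injective c := fun a b hab =>
    let ⟨i, j, hij⟩ := exists_pair_ne (Fin n)
    hc a b i j hij (congrFun hab i) (congrFun hab j)
  refine ⟨Finset.univ.image c, ?_, planeCode_image hc⟩
  rw [Finset.card_image_of_injective _ hinj, Finset.card_univ, ← Nat.card_eq_fintype_card,
    card_points_notMem, horder]

theorem plane_code_of_projective_plane (n : ℕ) (hn : 2 ≤ n)
    (P L : Type*) [Membership P L] [Configuration.ProjectivePlane P L]
    [Fintype P] [Fintype L]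
    (horder : Configuration.ProjectivePlane.order P L = n) :
    ∃ B : Finset (Fin n → ZMod n), B.card = n ^ 2 ∧ PlaneCode B :=
  plane_code_of_projective_plane_general n P L horder
end
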